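/- Let A ∈ M_2(ℂ)^{⊗n} with ‖A‖ ≤ 1 and define D_good = {d = 2^l, l a nonnegative integer : W_{≈d}[A] ≥ Var[A]² / (16·Inf^1[A])}. Then Var[A] ≤ 4·Σ_{d ∈ D_good} W_{≈d}[A]. -/

import Mathlib

open scoped BigOperators
open Matrix

noncomputable section

/-- The index set of the `n`-qubit Hilbert space `(ℂ²)^{⊗n}`. -/
abbrev QIdx (n : ℕ) := Fin n → Fin 2

/-- The algebra `M_2(ℂ)^{⊗n} ≅ M_{2^n}(ℂ)` of observables on `n` qubits. -/
abbrev QOp (n : ℕ) := Matrix (QIdx n) (QIdx n) ℂ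

/-- The four Pauli matrices `σ_0, σ_1, σ_2, σ_3`. -/
def pauli : Fin 4 → Matrix (Fin 2) (Fin 2) ℂ :=
  ![!![1, 0; 0, 1], !![0, 1; 1, 0], !![0, -Complex.I; Complex.I, 0], !![1, 0; 0, -1]]

/-- The Pauli string `σ_s = σ_{s_1} ⊗ ⋯ ⊗ σ_{s_n}`. -/
def pauliString {n : ℕ} (s : Fin n → Fin 4) : QOp n :=
  Matrix.of fun x y => ∏ j, pauli (s j) (x j) (y j)

/-- The normalized trace `τ(A) = 2^{-n} tr(A)`. -/
def ntrace {n : ℕ} (A : QOp n) : ℂ := (2 ^ n : ℂ)⁻¹ * A.trace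

/-- The Pauli (Fourier) coefficient `Â_s = τ(σ_s A)`. -/
def coef {n : ℕ} (A : QOp n) (s : Fin n → Fin 4) : ℂ := ntrace (pauliString s * A)

/-- The support `{j : s_j ≠ 0}` of a Pauli index. -/
def psupp {n : ℕ} (s : Fin n → Fin 4) : Finset (Fin n) :=
  Finset.univ.filter fun j => s j ≠ 0

/-- `τ(|A|^p)`, computed via the eigenvalues of `Aᴴ A` (so `|A| = (AᴴA)^{1/2}`). -/
def traceAbsPow {n : ℕ} (p : ℝ) (A : QOp n) : ℝ :=
  (2 ^ n : ℝ)⁻¹ * ∑ i, ((Matrix.isHermitian_conjTranspose_mul_self A).eigenvalues i) ^ (p / 2)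

/-- The normalized Schatten `p`-norm `‖A‖_p = τ(|A|^p)^{1/p}`. -/
def pnorm {n : ℕ} (p : ℝ) (A : QOp n) : ℝ := traceAbsPow p A ^ (1 / p)

/-- The operator norm `‖A‖ = ‖A‖_∞`. -/
def opNorm {n : ℕ} (A : QOp n) : ℝ := ‖Matrix.toEuclideanCLM (𝕜 := ℂ) A‖

/-- The `j`-th derivative `d_j(A) = (I - E_j)(A) = ∑_{s : s_j ≠ 0} Â_s σ_s`. -/
def dOp {n : ℕ} (j : Fin n) (A : QOp n) : QOp n :=
  ∑ s ∈ Finset.univ.filter (fun s : Fin n → Fin 4 => s j ≠ 0), coef A s • pauliString s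

/-- The derivative `d_J = ∏_{j ∈ J} d_j` for a subset `J ⊆ [n]`:
`d_J(A) = ∑_{s : J ⊆ supp s} Â_s σ_s`. -/
def dSet {n : ℕ} (J : Finset (Fin n)) (A : QOp n) : QOp n :=
  ∑ s ∈ Finset.univ.filter (fun s : Fin n → Fin 4 => ∀ j ∈ J, s j ≠ 0),
    coef A s • pauliString s

/-- The conditional expectation `E_J` killing all Pauli terms meeting `J`
(i.e. the normalized partial trace `τ_J` over the qubits in `J`, re-embedded in
`M_2(ℂ)^{⊗n}` by tensoring with the identity on the qubits in `J`). -/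
def eSet {n : ℕ} (J : Finset (Fin n)) (A : QOp n) : QOp n :=
  ∑ s ∈ Finset.univ.filter (fun s : Fin n → Fin 4 => ∀ j ∈ J, s j = 0),
    coef A s • pauliString s

/-- `σ_{k(j)}` : the Pauli matrix `σ_k` on the `j`-th factor and identity elsewhere. -/
def sigmaAt {n : ℕ} (j : Fin n) (k : Fin 4) : QOp n :=
  pauliString fun i => if i = j then k else 0

/-- The `j`-th `L^p`-influence `Inf^p_j[A] = ‖d_j(A)‖_p^p`. -/
def infP {n : ℕ} (p : ℝ) (j : Fin n) (A : QOp n) : ℝ := traceAbsPow p (dOp j A)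

/-- The total `L^p`-influence `Inf^p[A] = ∑_j Inf^p_j[A]`. -/
def infPTotal {n : ℕ} (p : ℝ) (A : QOp n) : ℝ := ∑ j, infP p j A

/-- The `L^p`-influence of a subset, `Inf^p_J[A] = ‖d_J(A)‖_p^p`. -/
def infPSet {n : ℕ} (p : ℝ) (J : Finset (Fin n)) (A : QOp n) : ℝ := traceAbsPow p (dSet J A)

/-- The variance `Var[A] = ‖A - τ(A)1‖_2²`. -/
def var {n : ℕ} (A : QOp n) : ℝ := traceAbsPow 2 (A - ntrace A • 1)

/-- The noise operator `T_δ(A) = ∑_s δ^{|supp s|} Â_s σ_s`. -/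
def noiseOp {n : ℕ} (δ : ℝ) (A : QOp n) : QOp n :=
  ∑ s : Fin n → Fin 4, ((δ : ℂ) ^ (psupp s).card * coef A s) • pauliString s

/-- The soft chunk `B_d = (T_{1-1/(3d)} - T_{1-1/(2d)})(A)`. -/
def softChunk {n : ℕ} (d : ℕ) (A : QOp n) : QOp n :=
  noiseOp (1 - 1 / (3 * (d : ℝ))) A - noiseOp (1 - 1 / (2 * (d : ℝ))) A

/-- `W_{≥k}[A] = ∑_{|supp s| ≥ k} |Â_s|²`. -/
def wGE {n : ℕ} (k : ℕ) (A : QOp n) : ℝ :=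
  ∑ s ∈ Finset.univ.filter (fun s : Fin n → Fin 4 => k ≤ (psupp s).card), ‖coef A s‖ ^ 2

/-- `W_{≈d}[A] = ∑_{d ≤ |supp s| < 2d} |Â_s|²`. -/
def wApprox {n : ℕ} (d : ℕ) (A : QOp n) : ℝ :=
  ∑ s ∈ Finset.univ.filter
      (fun s : Fin n → Fin 4 => d ≤ (psupp s).card ∧ (psupp s).card < 2 * d),
    ‖coef A s‖ ^ 2

/-- `W_J(A) = ∑_{|supp v ∩ J| = 1} |Â_v|²`. -/
def wSet {n : ℕ} (J : Finset (Fin n)) (A : QOp n) : ℝ :=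
  ∑ v ∈ Finset.univ.filter (fun v : Fin n → Fin 4 => (psupp v ∩ J).card = 1), ‖coef A v‖ ^ 2

/-- The noise stability `S_δ[A] = ∑_{s ≠ 0} δ^{|supp s|} |Â_s|²`. -/
def noiseStab {n : ℕ} (δ : ℝ) (A : QOp n) : ℝ :=
  ∑ s ∈ Finset.univ.filter (fun s : Fin n → Fin 4 => s ≠ 0),
    δ ^ (psupp s).card * ‖coef A s‖ ^ 2

/-- The partial Fourier series `∂_J^γ(A) = ∑_{s : s_J = γ} Â_s σ_{s_{J^c}}`,
encoded by a single Pauli index `v` with `supp v = J` and `v|_J = γ ∈ {1,2,3}^J`,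
re-embedded in `M_2(ℂ)^{⊗n}` by tensoring with the identity on the qubits in `J`. -/
def dPartial {n : ℕ} (v : Fin n → Fin 4) (A : QOp n) : QOp n :=
  ∑ s ∈ Finset.univ.filter (fun s : Fin n → Fin 4 => ∀ j ∈ psupp v, s j = v j),
    coef A s • pauliString fun j => if j ∈ psupp v then 0 else s j

/-!
In the Pauli basis, `Var[A] = ∑_{s ≠ 0} |Â_s|²` splits into the dyadic level weights
`W_{≈2^l}[A]`, and both `Var[A]` and every `2^l · W_{≈2^l}[A]` are bounded by the total
`L²`-influence `Inf²[A] = ∑_j ‖d_j A‖₂² = ∑_s |supp s| · |Â_s|²`. As `E_j` is an average of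
conjugations by Pauli unitaries, `‖d_j A‖ ≤ 2 ‖A‖ ≤ 2`, hence `‖d_j A‖₂² ≤ 2 ‖d_j A‖₁` and
`Inf²[A] ≤ 2 Inf¹[A]`.

The levels below the threshold `T = Var²/(16 Inf¹)` then carry at most `3/4` of the variance:
with `2K ≤ 16 Inf¹/Var ≤ 2^K`, the first `K` of them contribute at most `K T ≤ Var/2`, and by
the decay `W_{≈2^l} ≤ 2 Inf¹ / 2^l` the remaining ones at most `4 Inf¹ / 2^K ≤ Var/4`.
-/

open scoped Matrix.Norms.L2Operator
open Finset

section PiKronecker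

variable {ι κ R : Type*} [Fintype ι] [CommSemiring R]

def piKronecker (M : ι → Matrix κ κ R) : Matrix (ι → κ) (ι → κ) R :=
  of fun x y => ∏ j, M j (x j) (y j)

lemma piKronecker_mul_piKronecker [DecidableEq ι] [Fintype κ] (M N : ι → Matrix κ κ R) :
    piKronecker M * piKronecker N = piKronecker fun j => M j * N j := by
  ext x y
  simp only [piKronecker, mul_apply, of_apply, ← prod_mul_distrib]
  rw [prod_univ_sum, Fintype.piFinset_univ]

lemma trace_piKronecker [DecidableEq ι] [Fintype κ] (M : ι → Matrix κ κ R) :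
    (piKronecker M).trace = ∏ j, (M j).trace := by
  simp only [piKronecker, trace, Matrix.diag, of_apply]
  rw [prod_univ_sum, Fintype.piFinset_univ]

lemma piKronecker_one [DecidableEq κ] : piKronecker (fun _ : ι => (1 : Matrix κ κ R)) = 1 := by
  ext x y
  simp only [piKronecker, of_apply, one_apply, prod_boole, mem_univ, true_implies, funext_iff]

lemma conjTranspose_piKronecker [StarRing R] (M : ι → Matrix κ κ R) :
    (piKronecker M)ᴴ = piKronecker fun j => (M j)ᴴ := by
  ext x y
  simp [piKronecker, conjTranspose_apply]

lemma piKronecker_smul (c : ι → R) (M : ι → Matrix κ κ R) :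
    piKronecker (fun j => c j • M j) = (∏ j, c j) • piKronecker M := by
  ext x y
  simp [piKronecker, prod_mul_distrib]

end PiKronecker

section Pauli

variable {n : ℕ}

lemma pauliString_eq_piKronecker (s : Fin n → Fin 4) :
    pauliString s = piKronecker fun j => pauli (s j) := rfl

lemma trace_pauli_mul_pauli (k m : Fin 4) :
    (pauli k * pauli m).trace = if k = m then 2 else 0 := by
  fin_cases k <;> fin_cases m <;>
    simp [pauli, trace, Fin.sum_univ_succ, Complex.I_mul_I] <;> norm_num

lemma pauli_mul_self (k : Fin 4) : pauli k * pauli k = 1 := by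
  fin_cases k <;> ext a b <;> fin_cases a <;> fin_cases b <;>
    simp [pauli, mul_apply, Fin.sum_univ_succ, Complex.I_mul_I, one_apply]

lemma pauli_conjTranspose (k : Fin 4) : (pauli k)ᴴ = pauli k := by
  fin_cases k <;> ext a b <;> fin_cases a <;> fin_cases b <;> simp [pauli]

lemma pauli_zero : pauli 0 = 1 := by
  ext a b; fin_cases a <;> fin_cases b <;> simp [pauli]

lemma pauliString_zero : pauliString (0 : Fin n → Fin 4) = 1 := by
  simp only [pauliString_eq_piKronecker, Pi.zero_apply, pauli_zero, piKronecker_one]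

lemma pauliString_mul_self (s : Fin n → Fin 4) : pauliString s * pauliString s = 1 := by
  simp only [pauliString_eq_piKronecker, piKronecker_mul_piKronecker, pauli_mul_self,
    piKronecker_one]

lemma pauliString_conjTranspose (s : Fin n → Fin 4) : (pauliString s)ᴴ = pauliString s := by
  simp only [pauliString_eq_piKronecker, conjTranspose_piKronecker, pauli_conjTranspose]

lemma ntrace_pauliString_mul_pauliString (s t : Fin n → Fin 4) :
    ntrace (pauliString s * pauliString t) = if s = t then 1 else 0 := by
  simp only [ntrace, pauliString_eq_piKronecker, piKronecker_mul_piKronecker, trace_piKronecker,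
    trace_pauli_mul_pauli, prod_ite_zero, prod_const, card_univ, Fintype.card_fin, mem_univ,
    true_implies, funext_iff]
  split_ifs <;> simp

lemma ntrace_smul (c : ℂ) (A : QOp n) : ntrace (c • A) = c * ntrace A := by
  simp only [ntrace, trace_smul, smul_eq_mul, mul_left_comm]

lemma ntrace_sum {α : Type*} (F : Finset α) (f : α → QOp n) :
    ntrace (∑ i ∈ F, f i) = ∑ i ∈ F, ntrace (f i) := by
  simp only [ntrace, trace_sum, mul_sum]

lemma coef_sum_smul_pauliString (F : Finset (Fin n → Fin 4)) (c : (Fin n → Fin 4) → ℂ)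
    (s : Fin n → Fin 4) :
    coef (∑ t ∈ F, c t • pauliString t) s = if s ∈ F then c s else 0 := by
  simp only [coef, mul_sum, Matrix.mul_smul, ntrace_sum, ntrace_smul,
    ntrace_pauliString_mul_pauliString, mul_ite, mul_one, mul_zero]
  exact sum_ite_eq F s c

lemma linearIndependent_pauliString : LinearIndependent ℂ (pauliString (n := n)) := by
  rw [Fintype.linearIndependent_iff]
  intro c hc s
  have hcoef := congrArg (coef · s) hc
  simp only [coef_sum_smul_pauliString, mem_univ, if_true] at hcoef
  simpa [coef, ntrace] using hcoef

lemma span_pauliString : Submodule.span ℂ (Set.range (pauliString (n := n))) = ⊤ :=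
  linearIndependent_pauliString.span_eq_top_of_card_eq_finrank' <| by
    simp [Module.finrank_matrix, ← mul_pow]

lemma sum_coef_smul_pauliString (A : QOp n) : ∑ s, coef A s • pauliString s = A := by
  obtain ⟨c, rfl⟩ := (Submodule.mem_span_range_iff_exists_fun ℂ).1
    (span_pauliString ▸ Submodule.mem_top : A ∈ _)
  simp only [coef_sum_smul_pauliString, mem_univ, if_true]

end Pauli

section Parseval

variable {n : ℕ}

lemma ntrace_conjTranspose (A : QOp n) : ntrace Aᴴ = star (ntrace A) := by
  simp [ntrace, trace_conjTranspose]

lemma ntrace_conjTranspose_mul_self (A : QOp n) :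
    ntrace (Aᴴ * A) = ((∑ s, ‖coef A s‖ ^ 2 : ℝ) : ℂ) := by
  nth_rw 2 [← sum_coef_smul_pauliString A]
  have hcoef : ∀ s, ntrace (Aᴴ * pauliString s) = star (coef A s) := fun s => by
    rw [coef, ← ntrace_conjTranspose, conjTranspose_mul, pauliString_conjTranspose]
  simp only [mul_sum, Matrix.mul_smul, ntrace_sum, ntrace_smul, hcoef, Complex.star_def,
    Complex.mul_conj, Complex.normSq_eq_norm_sq]
  push_cast
  rfl

lemma traceAbsPow_two (A : QOp n) : traceAbsPow 2 A = ∑ s, ‖coef A s‖ ^ 2 := by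
  have h : ((traceAbsPow 2 A : ℝ) : ℂ) = ntrace (Aᴴ * A) := by
    simp [traceAbsPow, ntrace, (isHermitian_conjTranspose_mul_self A).trace_eq_sum_eigenvalues]
  rw [ntrace_conjTranspose_mul_self] at h
  exact_mod_cast h

lemma traceAbsPow_two_sum_smul_pauliString (F : Finset (Fin n → Fin 4))
    (c : (Fin n → Fin 4) → ℂ) :
    traceAbsPow 2 (∑ t ∈ F, c t • pauliString t) = ∑ t ∈ F, ‖c t‖ ^ 2 := by
  simp [traceAbsPow_two, coef_sum_smul_pauliString, apply_ite (‖·‖ ^ 2), sum_ite_mem]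

lemma sub_ntrace_smul_one (A : QOp n) :
    A - ntrace A • 1 = ∑ s with s ≠ 0, coef A s • pauliString s := by
  have h := sum_coef_smul_pauliString A
  rw [← add_sum_erase _ _ (mem_univ 0), coef, pauliString_zero, one_mul] at h
  rw [sub_eq_iff_eq_add', filter_ne', h]

lemma var_eq_sum (A : QOp n) : var A = ∑ s with s ≠ 0, ‖coef A s‖ ^ 2 := by
  rw [var, sub_ntrace_smul_one, traceAbsPow_two_sum_smul_pauliString]

lemma infPTotal_two_eq_sum (A : QOp n) :
    infPTotal 2 A = ∑ s, ((psupp s).card : ℝ) * ‖coef A s‖ ^ 2 := by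
  simp only [infPTotal, infP, dOp, traceAbsPow_two_sum_smul_pauliString]
  rw [sum_comm' (t' := univ) (s' := psupp) (by simp [psupp])]
  simp only [sum_const, nsmul_eq_mul]

end Parseval

section Levels

variable {n : ℕ}

lemma card_psupp_eq_zero_iff {s : Fin n → Fin 4} : (psupp s).card = 0 ↔ s = 0 := by
  simp [psupp, filter_eq_empty_iff, funext_iff]

lemma card_psupp_le (s : Fin n → Fin 4) : (psupp s).card ≤ n :=
  (card_le_univ _).trans_eq (Fintype.card_fin n)

lemma var_le_infPTotal_two (A : QOp n) : var A ≤ infPTotal 2 A := by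
  rw [var_eq_sum, infPTotal_two_eq_sum]
  refine (sum_le_sum fun s hs => ?_).trans
    (sum_le_sum_of_subset_of_nonneg (filter_subset _ _) fun s _ _ => by positivity)
  have hcard : 1 ≤ (psupp s).card :=
    Nat.one_le_iff_ne_zero.2 (card_psupp_eq_zero_iff.not.2 (mem_filter.1 hs).2)
  exact le_mul_of_one_le_left (by positivity) (by exact_mod_cast hcard)

lemma mul_wApprox_le_infPTotal_two (d : ℕ) (A : QOp n) : d * wApprox d A ≤ infPTotal 2 A := by
  rw [wApprox, infPTotal_two_eq_sum, mul_sum]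
  refine (sum_le_sum fun s hs => ?_).trans
    (sum_le_sum_of_subset_of_nonneg (filter_subset _ _) fun s _ _ => by positivity)
  gcongr
  exact_mod_cast (mem_filter.1 hs).2.1

lemma wApprox_nonneg (d : ℕ) (A : QOp n) : 0 ≤ wApprox d A :=
  sum_nonneg fun _ _ => by positivity

lemma wApprox_eq_zero_of_lt {d : ℕ} (hd : n < d) (A : QOp n) : wApprox d A = 0 :=
  sum_eq_zero fun s hs => absurd ((mem_filter.1 hs).2.1.trans (card_psupp_le s)) (by omega)

lemma var_eq_sum_wApprox_two_pow (A : QOp n) : var A = ∑ l ∈ range n, wApprox (2 ^ l) A := by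
  rw [var_eq_sum, ← sum_fiberwise_of_maps_to (g := fun s => Nat.log 2 (psupp s).card)
    (t := range n) fun s hs => mem_range.2 <| Nat.log_lt_of_lt_pow
      (card_psupp_eq_zero_iff.not.2 (mem_filter.1 hs).2)
      ((card_psupp_le s).trans_lt n.lt_two_pow_self)]
  refine sum_congr rfl fun l _ => sum_congr ?_ fun _ _ => rfl
  ext s
  simp only [filter_filter, mem_filter, mem_univ, true_and, ← card_psupp_eq_zero_iff.not]
  constructor
  · rintro ⟨hs, hl⟩
    rwa [Nat.log_eq_iff (.inr ⟨one_lt_two, hs⟩), pow_succ'] at hl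
  · rintro ⟨hl, hl'⟩
    exact ⟨((Nat.two_pow_pos l).trans_le hl).ne',
      Nat.log_eq_of_pow_le_of_lt_pow hl (by rwa [pow_succ'])⟩

end Levels

section OperatorNorm

variable {n : ℕ}

lemma opNorm_eq_norm (A : QOp n) : opNorm A = ‖A‖ := rfl

lemma eigenvalues_conjTranspose_mul_self_le (A : QOp n) (i : QIdx n) :
    (isHermitian_conjTranspose_mul_self A).eigenvalues i ≤ ‖A‖ ^ 2 := by
  rw [sq, ← l2_opNorm_conjTranspose_mul_self]
  exact (Real.le_norm_self _).trans <| spectrum.norm_le_norm_of_mem <|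
    (isHermitian_conjTranspose_mul_self A).eigenvalues_mem_spectrum_real i

lemma traceAbsPow_two_le_norm_mul_traceAbsPow_one (A : QOp n) :
    traceAbsPow 2 A ≤ ‖A‖ * traceAbsPow 1 A := by
  rw [traceAbsPow, traceAbsPow, mul_left_comm ‖A‖, mul_sum univ _ ‖A‖]
  gcongr with i
  set μ := (isHermitian_conjTranspose_mul_self A).eigenvalues i
  have hμ : 0 ≤ μ := eigenvalues_conjTranspose_mul_self_nonneg A i
  have hsqrt : √μ ≤ ‖A‖ :=
    Real.sqrt_le_iff.2 ⟨norm_nonneg A, eigenvalues_conjTranspose_mul_self_le A i⟩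
  rw [div_self two_ne_zero, Real.rpow_one, ← Real.sqrt_eq_rpow]
  calc μ = √μ * √μ := (Real.mul_self_sqrt hμ).symm
    _ ≤ ‖A‖ * √μ := by gcongr

/-- The sign in `σ_k σ_m σ_k = ± σ_m`: `+1` exactly when `σ_k` and `σ_m` commute. -/
def pauliConjSign (k m : Fin 4) : ℂ := if k = 0 ∨ m = 0 ∨ k = m then 1 else -1

lemma pauli_mul_pauli_mul_pauli (k m : Fin 4) :
    pauli k * pauli m * pauli k = pauliConjSign k m • pauli m := by
  fin_cases k <;> fin_cases m <;> ext a b <;> fin_cases a <;> fin_cases b <;>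
    simp [pauli, pauliConjSign, mul_apply, Fin.sum_univ_succ, Complex.I_mul_I]

lemma sum_pauliConjSign (m : Fin 4) : ∑ k, pauliConjSign k m = if m = 0 then 4 else 0 := by
  fin_cases m <;> simp [pauliConjSign, Fin.sum_univ_succ]

lemma sigmaAt_mul_pauliString_mul_sigmaAt (j : Fin n) (k : Fin 4) (t : Fin n → Fin 4) :
    sigmaAt j k * pauliString t * sigmaAt j k = pauliConjSign k (t j) • pauliString t := by
  simp only [sigmaAt, pauliString_eq_piKronecker, piKronecker_mul_piKronecker,
    pauli_mul_pauli_mul_pauli, piKronecker_smul]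
  congr 1
  rw [prod_eq_single j] <;> simp +contextual [pauliConjSign]

lemma eSet_singleton (j : Fin n) (A : QOp n) :
    eSet {j} A = (4 : ℂ)⁻¹ • ∑ k, sigmaAt j k * A * sigmaAt j k := by
  conv_rhs => rw [← sum_coef_smul_pauliString A]
  simp only [mul_sum, sum_mul, Matrix.mul_smul, Matrix.smul_mul,
    sigmaAt_mul_pauliString_mul_sigmaAt, smul_smul]
  rw [sum_comm]
  simp only [← sum_smul, ← mul_sum, sum_pauliConjSign, smul_sum, eSet, sum_filter]
  refine sum_congr rfl fun t _ => ?_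
  by_cases ht : t j = 0 <;> simp [ht, smul_smul, mul_comm _ (4 : ℂ)]

lemma pauliString_mem_unitary (s : Fin n → Fin 4) : pauliString s ∈ unitary (QOp n) := by
  simp [Unitary.mem_iff, star_eq_conjTranspose, pauliString_conjTranspose, pauliString_mul_self]

lemma norm_eSet_singleton_le (j : Fin n) (A : QOp n) : ‖eSet {j} A‖ ≤ ‖A‖ := by
  have hconj : ∀ k, ‖sigmaAt j k * A * sigmaAt j k‖ = ‖A‖ := fun k => by
    rw [sigmaAt, CStarRing.norm_mul_mem_unitary _ (pauliString_mem_unitary _),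
      CStarRing.norm_mem_unitary_mul _ (pauliString_mem_unitary _)]
  calc ‖eSet {j} A‖ ≤ ‖(4 : ℂ)⁻¹‖ * ∑ k, ‖sigmaAt j k * A * sigmaAt j k‖ := by
        rw [eSet_singleton]; exact (norm_smul_le _ _).trans (by gcongr; exact norm_sum_le _ _)
    _ = ‖A‖ := by simp [hconj]

lemma dOp_eq_sub_eSet (j : Fin n) (A : QOp n) : dOp j A = A - eSet {j} A := by
  rw [eq_sub_iff_add_eq, dOp, eSet]
  conv_rhs => rw [← sum_coef_smul_pauliString A, ← sum_filter_add_sum_filter_not _ (· j ≠ 0)]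
  exact congrArg _ (sum_congr (filter_congr fun s _ => by simp) fun _ _ => rfl)

lemma norm_dOp_le (j : Fin n) (A : QOp n) : ‖dOp j A‖ ≤ 2 * ‖A‖ := by
  rw [dOp_eq_sub_eSet]
  linarith [norm_sub_le A (eSet {j} A), norm_eSet_singleton_le j A]

lemma infPTotal_two_le_two_mul_infPTotal_one (A : QOp n) (hA : ‖A‖ ≤ 1) :
    infPTotal 2 A ≤ 2 * infPTotal 1 A := by
  rw [infPTotal, infPTotal, mul_sum]
  refine sum_le_sum fun j _ => (traceAbsPow_two_le_norm_mul_traceAbsPow_one _).trans ?_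
  have : 0 ≤ traceAbsPow 1 (dOp j A) := mul_nonneg (by positivity) <|
    sum_nonneg fun i _ => Real.rpow_nonneg (eigenvalues_conjTranspose_mul_self_nonneg _ i) _
  exact mul_le_mul_of_nonneg_right ((norm_dOp_le j A).trans (by linarith)) this

end OperatorNorm

section Dyadic

lemma two_mul_add_two_le_two_pow {k : ℕ} (hk : 3 ≤ k) : 2 * k + 2 ≤ 2 ^ k := by
  induction k, hk using Nat.le_induction with
  | base => norm_num
  | succ k hk ih => rw [pow_succ]; omega

lemma exists_two_mul_le_le_two_pow {M : ℝ} (hM : 8 ≤ M) :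
    ∃ K : ℕ, 2 * K ≤ M ∧ M ≤ 2 ^ K := by
  refine ⟨⌊M / 2⌋₊, by linarith [Nat.floor_le (by linarith : 0 ≤ M / 2)], ?_⟩
  have hK : 3 ≤ ⌊M / 2⌋₊ := Nat.le_floor (by norm_num; linarith)
  have := Nat.lt_floor_add_one (M / 2)
  calc M ≤ 2 * ⌊M / 2⌋₊ + 2 := by linarith
    _ ≤ 2 ^ ⌊M / 2⌋₊ := by exact_mod_cast two_mul_add_two_le_two_pow hK

lemma sum_range_le_of_le_of_le_div_two_pow {b : ℕ → ℝ} {T c : ℝ} (hb : ∀ l, 0 ≤ b l)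
    (hT : ∀ l, b l ≤ T) (hc : ∀ l, b l ≤ c / 2 ^ l) (K N : ℕ) :
    ∑ l ∈ range N, b l ≤ K * T + 2 * c / 2 ^ K := by
  have hc0 : 0 ≤ c := by simpa using (hb 0).trans (hc 0)
  calc ∑ l ∈ range N, b l ≤ ∑ l ∈ range (K + N), b l :=
        sum_le_sum_of_subset_of_nonneg (range_subset_range.2 (by omega)) fun l _ _ => hb l
    _ = ∑ l ∈ range K, b l + ∑ i ∈ range N, b (K + i) := sum_range_add _ _ _
    _ ≤ ∑ l ∈ range K, T + ∑ i ∈ range N, c / 2 ^ K * (1 / 2) ^ i := by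
        gcongr with l _ i
        · exact hT l
        · exact (hc _).trans_eq (by rw [pow_add, _root_.one_div_pow]; field_simp)
    _ ≤ K * T + c / 2 ^ K * 2 := by
        rw [sum_const, card_range, nsmul_eq_mul, ← mul_sum]
        gcongr
        exact sum_geometric_two_le N
    _ = K * T + 2 * c / 2 ^ K := by ring

lemma le_four_mul_sum_indicator_of_dyadic_decay {V I : ℝ} {W : ℕ → ℝ} {N : ℕ}
    (hW : ∀ l, 0 ≤ W l) (hV : V = ∑ l ∈ range N, W l) (hWI : ∀ l, 2 ^ l * W l ≤ 2 * I)
    (hVI : V ≤ 2 * I) :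
    V ≤ 4 * ∑ l ∈ range N, {m | V ^ 2 / (16 * I) ≤ W m}.indicator W l := by
  set T := V ^ 2 / (16 * I) with hT
  rcases le_or_gt V 0 with hV0 | hV0
  · exact hV0.trans <| mul_nonneg (by norm_num) <|
      sum_nonneg fun l _ => Set.indicator_nonneg (fun m _ => hW m) l
  have hI : 0 < I := by linarith
  obtain ⟨K, hKM, hMK⟩ := exists_two_mul_le_le_two_pow (M := 16 * I / V)
    (by rw [le_div_iff₀ hV0]; linarith)
  have hbad : ∑ l ∈ range N, {m | T ≤ W m}ᶜ.indicator W l ≤ 3 / 4 * V := by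
    calc _ ≤ K * T + 2 * (2 * I) / 2 ^ K := by
          refine sum_range_le_of_le_of_le_div_two_pow
            (fun l => Set.indicator_nonneg (fun m _ => hW m) l)
            (Set.indicator_le' (fun m hm => (not_le.1 hm).le) fun _ _ => by positivity)
            (fun l => ?_) K N
          refine (Set.indicator_le_self' (fun m _ => hW m) l).trans ?_
          rw [le_div_iff₀ (by positivity), mul_comm]
          exact hWI l
      _ ≤ V / 2 + V / 4 := by
          rw [le_div_iff₀ hV0] at hKM
          rw [div_le_iff₀ hV0] at hMK
          refine add_le_add ?_ ?_
          · calc K * T = 2 * K * V * (V / (32 * I)) := by rw [hT]; ring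
              _ ≤ 16 * I * (V / (32 * I)) := by gcongr
              _ = V / 2 := by field_simp; ring
          · rw [div_le_div_iff₀ (by positivity) (by norm_num)]
            nlinarith
      _ = 3 / 4 * V := by ring
  have hsplit : V = ∑ l ∈ range N, {m | T ≤ W m}.indicator W l +
      ∑ l ∈ range N, {m | T ≤ W m}ᶜ.indicator W l := by
    rw [hV, ← sum_add_distrib]
    simp only [Set.indicator_self_add_compl_apply]
  linarith

end Dyadic

/-- **Lemma 3.7**: `Var[A] ≤ 4 ∑_{d ∈ D_good} W_{≈d}[A]`, where
`D_good = {d = 2ˡ : W_{≈d}[A] ≥ Var[A]²/(16 Inf¹[A])}`. -/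
theorem var_le_good_chunks (n : ℕ) (A : QOp n) (hA : opNorm A ≤ 1) :
    var A ≤ 4 * ∑' l : ℕ,
      {m : ℕ | var A ^ 2 / (16 * infPTotal 1 A) ≤ wApprox (2 ^ m) A}.indicator
        (fun m => wApprox (2 ^ m) A) l := by
  have hinf := infPTotal_two_le_two_mul_infPTotal_one A (by rwa [← opNorm_eq_norm])
  have hvanish : ∀ l ∉ range n, wApprox (2 ^ l) A = 0 := fun l hl =>
    wApprox_eq_zero_of_lt (n.lt_two_pow_self.trans_le <|
      Nat.pow_le_pow_right two_pos (not_lt.1 (mem_range.not.1 hl))) A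
  rw [tsum_eq_sum (s := range n) fun l hl => by simp [hvanish l hl]]
  exact le_four_mul_sum_indicator_of_dyadic_decay (fun l => wApprox_nonneg _ A)
    (var_eq_sum_wApprox_two_pow A)
    (fun l => by simpa using (mul_wApprox_le_infPTotal_two (2 ^ l) A).trans hinf)
    ((var_le_infPTotal_two A).trans hinf)

end
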